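/- arXiv:1810.03757 — 2 statements merged into one kernel-verified Lean document; each statement's English description precedes it below -/
import Mathlib

section
/- Let f ∈ Hol(α) be a bounded α-Hölder normalized potential (L_f 1 = 1) with distortion constant C_f, and let ν be the unique Borel probability measure on X with L_f^*ν = ν. Then the Markov operator P = L_f^* restricted to Borel probability measures is asymptotically stable with exponential rate: there exist C > 0 and s ∈ (0,1) such that for every Borel probability measure μ on X and every n ∈ ℕ, sup{ | ∫_X L_f^n g dμ − ∫_X g dν | : g:X→ℝ with |g(x)−g(y)| ≤ d̄(x,y) for all x,y } ≤ C·s^n, where d̄(x,y) = min{1, 4·C_f·d_X(x,y)^α}; i.e. d(P^n μ, ν) ≤ C·s^n in the Wasserstein metric associated to d̄. -/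
open MeasureTheory Filter Topology BoundedContinuousFunction

noncomputable section

variable {E : Type*} [MetricSpace E]

/-- The metric on the sequence space `X = E^ℕ`:
`d_X(x,y) = ∑_{n=1}^∞ 2⁻ⁿ · min(d_E(x_n,y_n), 1)`. -/
def dX (x y : ℕ → E) : ℝ :=
  ∑' n : ℕ, ((1 : ℝ) / 2) ^ (n + 1) * min (dist (x n) (y n)) 1

/-- The left shift `σ(x₁,x₂,x₃,…) = (x₂,x₃,…)`. -/
def shift (x : ℕ → E) : ℕ → E := fun n => x (n + 1)

theorem continuous_shift : Continuous (shift (E := E)) :=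
  continuous_pi fun n => continuous_apply (n + 1)

/-- Prepending one symbol: `ax = (a, x₁, x₂, …)`. -/
def cons (a : E) (x : ℕ → E) : ℕ → E := fun n => Nat.casesOn n a x

/-- Prepending a finite word `a = (a₁,…,a_n)`. -/
def prepend {n : ℕ} (a : Fin n → E) (x : ℕ → E) : ℕ → E :=
  fun k => if h : k < n then a ⟨k, h⟩ else x (k - n)

/-- Birkhoff sums `f_n = ∑_{k=0}^{n-1} f ∘ σᵏ`. -/
def birkhoff (f : (ℕ → E) → ℝ) (n : ℕ) (x : ℕ → E) : ℝ :=
  ∑ k ∈ Finset.range n, f (shift^[k] x)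

/-- Boundedness of a real-valued function on `X`. -/
def Bdd (g : (ℕ → E) → ℝ) : Prop := ∃ M : ℝ, ∀ x, |g x| ≤ M

/-- `g` is `α`-Hölder with constant `C` (w.r.t. the metric `dX`). -/
def HolderConst (α C : ℝ) (g : (ℕ → E) → ℝ) : Prop :=
  ∀ x y, |g x - g y| ≤ C * dX x y ^ α

/-- `g ∈ Hol(α)`: bounded, continuous and `α`-Hölder. -/
def MemHol (α : ℝ) (g : (ℕ → E) → ℝ) : Prop :=
  Continuous g ∧ Bdd g ∧ ∃ C : ℝ, HolderConst α C g

/-- `g ∈ C_b(X,ℝ)`: bounded and continuous. -/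
def MemCb (g : (ℕ → E) → ℝ) : Prop := Continuous g ∧ Bdd g

/-- The Hölder seminorm `D_α(g) = sup_{x ≠ y} |g x - g y| / d_X(x,y)^α`. -/
def Dalpha (α : ℝ) (g : (ℕ → E) → ℝ) : ℝ :=
  sSup {r : ℝ | ∃ x y : ℕ → E, x ≠ y ∧ r = |g x - g y| / dX x y ^ α}

/-- The supremum norm `‖g‖_∞`. -/
def supNorm (g : (ℕ → E) → ℝ) : ℝ := ⨆ x : ℕ → E, |g x|

/-- The Hölder norm `‖g‖_α = ‖g‖_∞ + D_α(g)`. -/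
def alphaNorm (α : ℝ) (g : (ℕ → E) → ℝ) : ℝ := supNorm g + Dalpha α g

variable [MeasurableSpace E] [BorelSpace E]

/-- The Ruelle transfer operator `L_f φ(x) = ∫_E e^{f(ax)} φ(ax) dp(a)`. -/
def ruelle (p : Measure E) (f φ : (ℕ → E) → ℝ) : (ℕ → E) → ℝ :=
  fun x => ∫ a, Real.exp (f (cons a x)) * φ (cons a x) ∂p

/-- The normalized operators `P^m_n(φ) = L_f^m(φ · L_f^n 1) / L_f^{m+n} 1`. -/
def Pmn (p : Measure E) (f : (ℕ → E) → ℝ) (m n : ℕ) (φ : (ℕ → E) → ℝ) : (ℕ → E) → ℝ :=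
  fun x => (ruelle p f)^[m] (fun y => φ y * (ruelle p f)^[n] (fun _ => 1) y) x /
    (ruelle p f)^[m + n] (fun _ => 1) x

/-- The equivalent bounded metric `d̄(x,y) = min{1, 4 C_f d_X(x,y)^α}`. -/
def dbar (Cf α : ℝ) (x y : ℕ → E) : ℝ := min 1 (4 * Cf * dX x y ^ α)

/-- The Wasserstein distance associated to `d̄`, via Kantorovich duality. -/
def wass (Cf α : ℝ) (μ₁ μ₂ : Measure (ℕ → E)) : ℝ :=
  sSup {r : ℝ | ∃ g : (ℕ → E) → ℝ,
    (∀ x y, |g x - g y| ≤ dbar Cf α x y) ∧ r = (∫ x, g x ∂μ₁) - ∫ x, g x ∂μ₂}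

/-!
Write `L_fⁿ h(x)` as the average of `h(bx)` over words `b ∈ Eⁿ` against the weights
`e^{f_n(bx)}`, which have total mass one by normalization. Then `L_fⁿ h(x) - L_fⁿ h(y)` splits into
a term comparing `h` at `bx` and `by`, points `2⁻ⁿ` times closer than `x` and `y`, and a term
bounded by the `L¹` distance between the two weight families, which the distortion constant
controls. For `N` large this makes `L_f^N` contract the `d̄`-Lipschitz constant by a factor
`θ < 1`, so `L_fⁿ g` has oscillation `O(θ^{n/N})`. As `ν` is `L_f`-invariant,
`∫ g dν = ∫ L_fⁿ g dν`, and two integrals of `L_fⁿ g` differ by at most its oscillation.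
-/

section Words

variable {E : Type*}

@[simp] lemma cons_zero (a : E) (x : ℕ → E) : cons a x 0 = a := rfl

@[simp] lemma cons_succ (a : E) (x : ℕ → E) (n : ℕ) : cons a x (n + 1) = x n := rfl

lemma prepend_zero (b : Fin 0 → E) (x : ℕ → E) : prepend b x = x := by
  funext k
  simp [prepend]

lemma prepend_finCons {n : ℕ} (a : E) (b : Fin n → E) (x : ℕ → E) :
    prepend (Fin.cons a b) x = cons a (prepend b x) := by
  funext k
  cases k with
  | zero => simp [prepend, cons]
  | succ k =>
    by_cases hk : k < n
    · simp [prepend, cons, hk, ← Fin.succ_mk]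
    · simp [prepend, cons, hk]

lemma birkhoff_succ_cons (f : (ℕ → E) → ℝ) (n : ℕ) (a : E) (x : ℕ → E) :
    birkhoff f (n + 1) (cons a x) = f (cons a x) + birkhoff f n x := by
  rw [birkhoff, Finset.sum_range_succ', add_comm]
  rfl

lemma abs_birkhoff_le {f : (ℕ → E) → ℝ} {M : ℝ} (hM : ∀ x, |f x| ≤ M) (n : ℕ) (x : ℕ → E) :
    |birkhoff f n x| ≤ n * M :=
  (Finset.abs_sum_le_sum_abs _ _).trans <| by
    simpa using Finset.sum_le_sum fun k (_ : k ∈ Finset.range n) => hM (shift^[k] x)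

def birkhoffWeight (f : (ℕ → E) → ℝ) (n : ℕ) (x : ℕ → E) (b : Fin n → E) : ℝ :=
  Real.exp (birkhoff f n (prepend b x))

lemma birkhoffWeight_pos (f : (ℕ → E) → ℝ) (n : ℕ) (x : ℕ → E) (b : Fin n → E) :
    0 < birkhoffWeight f n x b :=
  Real.exp_pos _

lemma birkhoffWeight_finCons (f : (ℕ → E) → ℝ) (n : ℕ) (x : ℕ → E) (a : E) (b : Fin n → E) :
    birkhoffWeight f (n + 1) x (Fin.cons a b)
      = birkhoffWeight f n x b * Real.exp (f (cons a (prepend b x))) := by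
  rw [birkhoffWeight, birkhoffWeight, prepend_finCons, birkhoff_succ_cons, Real.exp_add, mul_comm]

variable [TopologicalSpace E]

lemma continuous_cons_left (x : ℕ → E) : Continuous fun a : E => cons a x :=
  continuous_pi fun n => by
    cases n
    · exact continuous_id
    · exact continuous_const

lemma continuous_cons_right (a : E) : Continuous fun x : ℕ → E => cons a x :=
  continuous_pi fun n => by
    cases n
    · exact continuous_const
    · exact continuous_apply _

lemma continuous_prepend_left {n : ℕ} (x : ℕ → E) : Continuous fun b : Fin n → E => prepend b x :=
  continuous_pi fun k => by
    by_cases hk : k < n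
    · simpa [prepend, hk] using continuous_apply _
    · simpa [prepend, hk] using continuous_const

end Words

section SequenceSpace

variable {E : Type*} [MetricSpace E]

lemma dX_term_nonneg (x y : ℕ → E) (n : ℕ) :
    0 ≤ ((1 : ℝ) / 2) ^ (n + 1) * min (dist (x n) (y n)) 1 :=
  mul_nonneg (by positivity) (le_min dist_nonneg zero_le_one)

lemma dX_term_le (x y : ℕ → E) (n : ℕ) :
    ((1 : ℝ) / 2) ^ (n + 1) * min (dist (x n) (y n)) 1 ≤ ((1 : ℝ) / 2) ^ (n + 1) :=
  mul_le_of_le_one_right (by positivity) (min_le_right _ _)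

lemma hasSum_half_pow_succ : HasSum (fun n : ℕ => ((1 : ℝ) / 2) ^ (n + 1)) 1 := by
  simpa [pow_succ] using hasSum_geometric_two.mul_right (1 / 2 : ℝ)

lemma summable_dX_term (x y : ℕ → E) :
    Summable fun n => ((1 : ℝ) / 2) ^ (n + 1) * min (dist (x n) (y n)) 1 :=
  .of_nonneg_of_le (dX_term_nonneg x y) (dX_term_le x y) hasSum_half_pow_succ.summable

lemma dX_nonneg (x y : ℕ → E) : 0 ≤ dX x y :=
  tsum_nonneg (dX_term_nonneg x y)

lemma dX_le_one (x y : ℕ → E) : dX x y ≤ 1 :=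
  (summable_dX_term x y).tsum_le_tsum (dX_term_le x y) hasSum_half_pow_succ.summable |>.trans_eq
    hasSum_half_pow_succ.tsum_eq

lemma dX_self (x : ℕ → E) : dX x x = 0 := by
  simp [dX]

lemma continuous_dX_left (y : ℕ → E) : Continuous fun x : ℕ → E => dX x y :=
  continuous_tsum
    (fun n => continuous_const.mul (((continuous_apply n).dist continuous_const).min
      continuous_const))
    hasSum_half_pow_succ.summable
    (fun n x => by
      rw [Real.norm_eq_abs, abs_of_nonneg (dX_term_nonneg x y n)]
      exact dX_term_le x y n)

lemma dX_cons (a : E) (x y : ℕ → E) : dX (cons a x) (cons a y) = 1 / 2 * dX x y := by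
  rw [dX, (summable_dX_term _ _).tsum_eq_zero_add, dX, ← tsum_mul_left]
  simp only [cons_zero, cons_succ, dist_self, min_eq_left zero_le_one, mul_zero, zero_add]
  exact tsum_congr fun n => by ring

lemma dX_prepend {n : ℕ} (b : Fin n → E) (x y : ℕ → E) :
    dX (prepend b x) (prepend b y) = (1 / 2) ^ n * dX x y := by
  induction n with
  | zero => simp [prepend_zero]
  | succ n ih =>
    rw [← Fin.cons_self_tail b, prepend_finCons, prepend_finCons, dX_cons, ih, pow_succ]
    ring

lemma dbar_prepend {Cf α : ℝ} {n : ℕ} (b : Fin n → E) (x y : ℕ → E) :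
    dbar Cf α (prepend b x) (prepend b y) =
      min 1 (4 * Cf * ((((1 : ℝ) / 2) ^ α) ^ n * dX x y ^ α)) := by
  rw [dbar, dX_prepend, Real.mul_rpow (by positivity) (dX_nonneg x y),
    Real.rpow_pow_comm (by norm_num)]

lemma continuous_birkhoff {f : (ℕ → E) → ℝ} (hf : Continuous f) (n : ℕ) :
    Continuous (birkhoff f n) :=
  continuous_finsetSum _ fun k _ => hf.comp (continuous_shift.iterate k)

lemma continuous_birkhoffWeight {f : (ℕ → E) → ℝ} (hf : Continuous f) (n : ℕ) (x : ℕ → E) :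
    Continuous (birkhoffWeight f n x) :=
  Real.continuous_exp.comp ((continuous_birkhoff hf n).comp (continuous_prepend_left x))

def HasDistortionConst (f : (ℕ → E) → ℝ) (Cf α : ℝ) : Prop :=
  ∀ (n : ℕ) (a : Fin n → E) (x y : ℕ → E),
    |1 - Real.exp (birkhoff f n (prepend a y) - birkhoff f n (prepend a x))| ≤ Cf * dX x y ^ α

def DbarLipschitz (Cf α κ : ℝ) (h : (ℕ → E) → ℝ) : Prop :=
  ∀ u v, |h u - h v| ≤ κ * dbar Cf α u v

end SequenceSpace

lemma exists_abs_sub_le_half {ι : Type*} {h : ι → ℝ} {κ : ℝ} (hh : ∀ u v, |h u - h v| ≤ κ) :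
    ∃ c, ∀ u, |h u - c| ≤ κ / 2 := by
  rcases isEmpty_or_nonempty ι with hι | hι
  · exact ⟨0, isEmptyElim⟩
  obtain ⟨u₀⟩ := hι
  have hle : ∀ u v, h u ≤ h v + κ := fun u v => by linarith [(abs_le.1 (hh u v)).2]
  have hA : BddAbove (Set.range h) := ⟨h u₀ + κ, by rintro _ ⟨u, rfl⟩; exact hle u u₀⟩
  have hB : BddBelow (Set.range h) := ⟨h u₀ - κ, by rintro _ ⟨u, rfl⟩; linarith [hle u₀ u]⟩
  have hspread : sSup (Set.range h) ≤ sInf (Set.range h) + κ :=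
    csSup_le ⟨h u₀, u₀, rfl⟩ <| by
      rintro _ ⟨u, rfl⟩
      have : h u - κ ≤ sInf (Set.range h) :=
        le_csInf ⟨h u₀, u₀, rfl⟩ <| by rintro _ ⟨v, rfl⟩; linarith [hle u v]
      linarith
  refine ⟨(sSup (Set.range h) + sInf (Set.range h)) / 2, fun u => abs_le.2 ⟨?_, ?_⟩⟩
  · linarith [csInf_le hB (Set.mem_range_self u)]
  · linarith [le_csSup hA (Set.mem_range_self u)]

section Integrals

variable {β : Type*} [MeasurableSpace β]

lemma Continuous.integrable_of_abs_le [TopologicalSpace β] [OpensMeasurableSpace β] {g : β → ℝ}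
    (hg : Continuous g) {M : ℝ} (hM : ∀ x, |g x| ≤ M) (μ : Measure β) [IsFiniteMeasure μ] :
    Integrable g μ :=
  .of_bound hg.aestronglyMeasurable M (ae_of_all _ hM)

lemma abs_integral_mul_le {m : Measure β} {ρ φ : β → ℝ} (hρ : Integrable ρ m)
    (hφ : AEStronglyMeasurable φ m) {K : ℝ} (hφK : ∀ b, |φ b| ≤ K) :
    |∫ b, ρ b * φ b ∂m| ≤ K * ∫ b, |ρ b| ∂m := by
  have hρφ : Integrable (fun b => ρ b * φ b) m := hρ.mul_bdd hφ (ae_of_all _ hφK)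
  calc |∫ b, ρ b * φ b ∂m| ≤ ∫ b, |ρ b * φ b| ∂m := abs_integral_le_integral_abs
    _ ≤ ∫ b, |ρ b| * K ∂m := integral_mono hρφ.abs (hρ.abs.mul_const K) fun b => by
        rw [abs_mul]
        exact mul_le_mul_of_nonneg_left (hφK b) (abs_nonneg _)
    _ = K * ∫ b, |ρ b| ∂m := by rw [integral_mul_const, mul_comm]

lemma abs_integral_mul_sub_integral_mul_le {m : Measure β} {ρ₁ ρ₂ φ : β → ℝ}
    (hρ₁ : Integrable ρ₁ m) (hρ₂ : Integrable ρ₂ m) (hmass : ∫ b, ρ₁ b ∂m = ∫ b, ρ₂ b ∂m)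
    (hφ : AEStronglyMeasurable φ m) {c K : ℝ} (hφK : ∀ b, |φ b - c| ≤ K) :
    |∫ b, ρ₁ b * φ b ∂m - ∫ b, ρ₂ b * φ b ∂m| ≤ K * ∫ b, |ρ₁ b - ρ₂ b| ∂m := by
  have hφb : ∀ᵐ b ∂m, ‖φ b‖ ≤ |c| + K := ae_of_all _ fun b => by
    rw [Real.norm_eq_abs]
    linarith [abs_sub_abs_le_abs_sub (φ b) c, hφK b]
  have h₁ : Integrable (fun b => ρ₁ b * φ b) m := hρ₁.mul_bdd hφ hφb
  have h₂ : Integrable (fun b => ρ₂ b * φ b) m := hρ₂.mul_bdd hφ hφb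
  have hcentre : ∫ b, ρ₁ b * φ b ∂m - ∫ b, ρ₂ b * φ b ∂m
      = ∫ b, (ρ₁ b - ρ₂ b) * (φ b - c) ∂m := by
    have hexpand : ∀ b, (ρ₁ b - ρ₂ b) * (φ b - c) = (ρ₁ b * φ b - ρ₂ b * φ b) - c * (ρ₁ b - ρ₂ b) :=
      fun b => by ring
    have h₁₂ : Integrable (fun b => ρ₁ b * φ b - ρ₂ b * φ b) m := h₁.sub h₂
    have hc : Integrable (fun b => c * (ρ₁ b - ρ₂ b)) m := (hρ₁.sub hρ₂).const_mul c
    simp_rw [hexpand]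
    rw [integral_sub h₁₂ hc, integral_sub h₁ h₂,
      integral_const_mul, integral_sub hρ₁ hρ₂, hmass, sub_self, mul_zero, sub_zero]
  rw [hcentre]
  exact abs_integral_mul_le (hρ₁.sub hρ₂) (hφ.sub aestronglyMeasurable_const) hφK

lemma integral_le_integral_add_of_abs_sub_le {μ ν : Measure β} [IsProbabilityMeasure μ]
    [IsProbabilityMeasure ν] {φ : β → ℝ} (hμ : Integrable φ μ) (hν : Integrable φ ν) {c : ℝ}
    (hφ : ∀ u v, |φ u - φ v| ≤ c) : ∫ u, φ u ∂μ ≤ ∫ u, φ u ∂ν + c := by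
  have hpoint : ∀ v, ∫ u, φ u ∂μ - c ≤ φ v := fun v => by
    have := integral_mono hμ (integrable_const (φ v + c)) fun u => by
      linarith [(abs_le.1 (hφ u v)).2]
    simp only [integral_const, probReal_univ, one_smul] at this
    linarith
  have := integral_mono (integrable_const _) hν hpoint
  simp only [integral_const, probReal_univ, one_smul] at this
  linarith

lemma abs_integral_sub_integral_le {μ ν : Measure β} [IsProbabilityMeasure μ]
    [IsProbabilityMeasure ν] {φ : β → ℝ} (hμ : Integrable φ μ) (hν : Integrable φ ν) {c : ℝ}
    (hφ : ∀ u v, |φ u - φ v| ≤ c) : |∫ u, φ u ∂μ - ∫ u, φ u ∂ν| ≤ c :=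
  abs_sub_le_iff.2 ⟨by linarith [integral_le_integral_add_of_abs_sub_le hμ hν hφ],
    by linarith [integral_le_integral_add_of_abs_sub_le hν hμ hφ]⟩

lemma integral_integral_finCons (m : Measure β) [SigmaFinite m] {n : ℕ}
    {G : (Fin (n + 1) → β) → ℝ} (hG : Integrable G (Measure.pi fun _ => m)) :
    ∫ b, ∫ a, G (Fin.cons a b) ∂m ∂(Measure.pi fun _ : Fin n => m)
      = ∫ c, G c ∂(Measure.pi fun _ => m) := by
  have e := (measurePreserving_piFinSuccAbove (fun _ : Fin (n + 1) => m) 0).symm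
  have hcons : ⇑(MeasurableEquiv.piFinSuccAbove (fun _ : Fin (n + 1) => β) 0).symm
      = fun q => Fin.cons q.1 q.2 := by
    funext q
    simp [MeasurableEquiv.piFinSuccAbove_symm_apply, Fin.consEquiv]
  rw [← e.integral_comp' G, integral_prod_symm]
  · simp only [hcons]
  · exact (e.integrable_comp_emb (MeasurableEquiv.measurableEmbedding _)).2 hG

end Integrals

lemma ruelle_iterate_one {E : Type*} [MeasurableSpace E] {p : Measure E} {f : (ℕ → E) → ℝ}
    (hnorm : ∀ x, ruelle p f (fun _ => 1) x = 1) (n : ℕ) :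
    (ruelle p f)^[n] (fun _ => 1) = fun _ => 1 := by
  induction n with
  | zero => rfl
  | succ n ih => rw [Function.iterate_succ_apply', ih, funext hnorm]

section Ruelle

variable {E : Type*} [MetricSpace E] [MeasurableSpace E] [BorelSpace E]
  (p : Measure E) {f : (ℕ → E) → ℝ}

lemma memCb_ruelle [IsFiniteMeasure p] (hf : MemCb f) {h : (ℕ → E) → ℝ} (hh : MemCb h) :
    MemCb (ruelle p f h) := by
  obtain ⟨hfc, Mf, hMf⟩ := hf
  obtain ⟨hc, M, hM⟩ := hh
  have hbound : ∀ u, ‖Real.exp (f u) * h u‖ ≤ Real.exp Mf * M := fun u => by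
    rw [Real.norm_eq_abs, abs_mul, Real.abs_exp]
    exact mul_le_mul (Real.exp_le_exp.2 (le_of_abs_le (hMf u))) (hM u) (abs_nonneg _)
      (Real.exp_pos _).le
  have hcont : ∀ x, Continuous fun a : E => Real.exp (f (cons a x)) * h (cons a x) := fun x =>
    (Real.continuous_exp.comp (hfc.comp (continuous_cons_left x))).mul
      (hc.comp (continuous_cons_left x))
  refine ⟨continuous_of_dominated (fun x => (hcont x).aestronglyMeasurable)
    (fun x => ae_of_all _ fun a => hbound _) (integrable_const _) (ae_of_all _ fun a => ?_),
    Real.exp Mf * M * p.real Set.univ, fun x => ?_⟩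
  · exact (Real.continuous_exp.comp (hfc.comp (continuous_cons_right a))).mul
      (hc.comp (continuous_cons_right a))
  · exact norm_integral_le_of_norm_le_const (ae_of_all _ fun a => hbound _)

lemma memCb_ruelle_iterate [IsFiniteMeasure p] (hf : MemCb f) {h : (ℕ → E) → ℝ} (hh : MemCb h)
    (n : ℕ) : MemCb ((ruelle p f)^[n] h) := by
  induction n with
  | zero => exact hh
  | succ n ih =>
    rw [Function.iterate_succ_apply']
    exact memCb_ruelle p hf ih

lemma integral_ruelle_iterate [IsFiniteMeasure p] (hf : MemCb f) {ν : Measure (ℕ → E)}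
    (hconf : ∀ φ : (ℕ → E) → ℝ, MemCb φ → ∫ x, ruelle p f φ x ∂ν = ∫ x, φ x ∂ν)
    {h : (ℕ → E) → ℝ} (hh : MemCb h) (n : ℕ) :
    ∫ x, (ruelle p f)^[n] h x ∂ν = ∫ x, h x ∂ν := by
  induction n with
  | zero => rfl
  | succ n ih => rw [Function.iterate_succ_apply', hconf _ (memCb_ruelle_iterate p hf hh n), ih]

variable [SecondCountableTopology E]

lemma integrable_birkhoffWeight (hf : MemCb f) (n : ℕ) (x : ℕ → E) (m : Measure (Fin n → E))
    [IsFiniteMeasure m] : Integrable (birkhoffWeight f n x) m := by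
  obtain ⟨hfc, Mf, hMf⟩ := hf
  refine (continuous_birkhoffWeight hfc n x).integrable_of_abs_le (M := Real.exp (n * Mf))
    (fun b => ?_) m
  rw [birkhoffWeight, Real.abs_exp]
  exact Real.exp_le_exp.2 (le_of_abs_le (abs_birkhoff_le hMf n _))

lemma ruelle_iterate_eq_integral [IsProbabilityMeasure p] (hf : MemCb f) {h : (ℕ → E) → ℝ}
    (hh : MemCb h) (n : ℕ) (x : ℕ → E) :
    (ruelle p f)^[n] h x
      = ∫ b, birkhoffWeight f n x b * h (prepend b x) ∂(Measure.pi fun _ : Fin n => p) := by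
  induction n generalizing h with
  | zero => simp [birkhoffWeight, birkhoff, prepend_zero]
  | succ n ih =>
    obtain ⟨hc, M, hM⟩ := hh
    have hG : Integrable (fun c => birkhoffWeight f (n + 1) x c * h (prepend c x))
        (Measure.pi fun _ => p) :=
      (integrable_birkhoffWeight hf _ x _).mul_bdd
        (hc.comp (continuous_prepend_left x)).aestronglyMeasurable (ae_of_all _ fun c => hM _)
    rw [Function.iterate_succ_apply, ih (memCb_ruelle p hf ⟨hc, M, hM⟩),
      ← integral_integral_finCons p hG]
    refine integral_congr_ae (ae_of_all _ fun b => ?_)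
    simp only [ruelle, ← integral_const_mul, birkhoffWeight_finCons f, prepend_finCons, mul_assoc]

lemma integral_birkhoffWeight [IsProbabilityMeasure p] (hf : MemCb f)
    (hnorm : ∀ x, ruelle p f (fun _ => 1) x = 1) (n : ℕ) (x : ℕ → E) :
    ∫ b, birkhoffWeight f n x b ∂(Measure.pi fun _ : Fin n => p) = 1 := by
  have h := ruelle_iterate_eq_integral p hf (h := fun _ => 1)
    ⟨continuous_const, 1, fun _ => by simp⟩ n x
  rw [ruelle_iterate_one hnorm] at h
  simpa using h.symm

end Ruelle

lemma abs_sub_le_div_mul_add {a b c : ℝ} (hc : 0 ≤ c) (hab : a ≤ (1 + c) * b)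
    (hba : b ≤ (1 + c) * a) : |a - b| ≤ c / (1 + c) * (a + b) := by
  rw [div_mul_eq_mul_div, le_div_iff₀ (by linarith)]
  rcases abs_cases (a - b) with ⟨h, _⟩ | ⟨h, _⟩ <;> rw [h] <;> nlinarith

section Distortion

variable {E : Type*} [MetricSpace E] {f : (ℕ → E) → ℝ} {Cf α : ℝ}

lemma abs_birkhoffWeight_sub_le (hd : HasDistortionConst f Cf α) {n : ℕ} (x y : ℕ → E)
    (b : Fin n → E) :
    |birkhoffWeight f n x b - birkhoffWeight f n y b|
      ≤ Cf * dX x y ^ α * birkhoffWeight f n x b := by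
  have hy : birkhoffWeight f n y b = birkhoffWeight f n x b *
      Real.exp (birkhoff f n (prepend b y) - birkhoff f n (prepend b x)) := by
    rw [birkhoffWeight, birkhoffWeight, ← Real.exp_add, add_sub_cancel]
  rw [hy, ← mul_one_sub, abs_mul, abs_of_pos (birkhoffWeight_pos f n x b), mul_comm]
  exact mul_le_mul_of_nonneg_right (hd n b x y) (birkhoffWeight_pos f n x b).le

lemma birkhoffWeight_le_one_add_mul (hd : HasDistortionConst f Cf α) (hCf : 0 ≤ Cf) (hα : 0 ≤ α)
    {n : ℕ} (x y : ℕ → E) (b : Fin n → E) :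
    birkhoffWeight f n y b ≤ (1 + Cf) * birkhoffWeight f n x b := by
  have hdist : Cf * dX x y ^ α ≤ Cf :=
    mul_le_of_le_one_right hCf (Real.rpow_le_one (dX_nonneg x y) (dX_le_one x y) hα)
  have := mul_le_mul_of_nonneg_right hdist (birkhoffWeight_pos f n x b).le
  linarith [(abs_le.1 (abs_birkhoffWeight_sub_le hd x y b)).1]

variable [MeasurableSpace E] [BorelSpace E] [SecondCountableTopology E]
  (p : Measure E) [IsProbabilityMeasure p]

lemma integral_abs_birkhoffWeight_sub_le (hf : MemCb f) (hnorm : ∀ x, ruelle p f (fun _ => 1) x = 1)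
    (hd : HasDistortionConst f Cf α) (hCf : 0 ≤ Cf) (hα : 0 ≤ α) (n : ℕ) (x y : ℕ → E) :
    ∫ b, |birkhoffWeight f n x b - birkhoffWeight f n y b| ∂(Measure.pi fun _ : Fin n => p)
      ≤ min (2 * (Cf / (1 + Cf))) (Cf * dX x y ^ α) := by
  have hx := integrable_birkhoffWeight hf n x (Measure.pi fun _ : Fin n => p)
  have hy := integrable_birkhoffWeight hf n y (Measure.pi fun _ : Fin n => p)
  have hxy : Integrable (fun b => |birkhoffWeight f n x b - birkhoffWeight f n y b|)
      (Measure.pi fun _ : Fin n => p) := (hx.sub hy).abs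
  refine le_min ?_ ?_
  · calc _ ≤ ∫ b, Cf / (1 + Cf) * (birkhoffWeight f n x b + birkhoffWeight f n y b)
            ∂(Measure.pi fun _ : Fin n => p) :=
          integral_mono hxy ((hx.add hy).const_mul _) fun b =>
            abs_sub_le_div_mul_add hCf (birkhoffWeight_le_one_add_mul hd hCf hα y x b)
              (birkhoffWeight_le_one_add_mul hd hCf hα x y b)
      _ = 2 * (Cf / (1 + Cf)) := by
          rw [integral_const_mul, integral_add hx hy, integral_birkhoffWeight p hf hnorm,
            integral_birkhoffWeight p hf hnorm]
          ring
  · calc _ ≤ ∫ b, Cf * dX x y ^ α * birkhoffWeight f n x b ∂(Measure.pi fun _ : Fin n => p) :=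
          integral_mono hxy (hx.const_mul _) (abs_birkhoffWeight_sub_le hd x y)
      _ = Cf * dX x y ^ α := by
          rw [integral_const_mul, integral_birkhoffWeight p hf hnorm, mul_one]

/-- Centering `h` at the midpoint of its range gives the factor `1 / 2` in the distortion term. -/
theorem abs_ruelle_iterate_sub_le (hf : MemCb f) (hnorm : ∀ x, ruelle p f (fun _ => 1) x = 1)
    (hd : HasDistortionConst f Cf α) (hCf : 0 ≤ Cf) (hα : 0 ≤ α) {h : (ℕ → E) → ℝ}
    (hh : MemCb h) {κ : ℝ} (hκ : 0 ≤ κ) (hLip : DbarLipschitz Cf α κ h) (n : ℕ) (x y : ℕ → E) :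
    |(ruelle p f)^[n] h x - (ruelle p f)^[n] h y|
      ≤ κ * min 1 (4 * Cf * ((((1 : ℝ) / 2) ^ α) ^ n * dX x y ^ α))
        + κ / 2 * min (2 * (Cf / (1 + Cf))) (Cf * dX x y ^ α) := by
  obtain ⟨hcont, M, hM⟩ := hh
  obtain ⟨c, hc⟩ := exists_abs_sub_le_half fun u v =>
    (hLip u v).trans (mul_le_of_le_one_right hκ (min_le_left _ _))
  set m := Measure.pi fun _ : Fin n => p
  have hwx := integrable_birkhoffWeight hf n x m
  have hwy := integrable_birkhoffWeight hf n y m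
  have hhx : AEStronglyMeasurable (fun b => h (prepend b x)) m :=
    (hcont.comp (continuous_prepend_left x)).aestronglyMeasurable
  have hhy : AEStronglyMeasurable (fun b => h (prepend b y)) m :=
    (hcont.comp (continuous_prepend_left y)).aestronglyMeasurable
  have hsplit : (ruelle p f)^[n] h x - (ruelle p f)^[n] h y
      = ∫ b, birkhoffWeight f n x b * (h (prepend b x) - h (prepend b y)) ∂m
        + (∫ b, birkhoffWeight f n x b * h (prepend b y) ∂m
          - ∫ b, birkhoffWeight f n y b * h (prepend b y) ∂m) := by
    simp_rw [mul_sub]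
    rw [integral_sub (hwx.mul_bdd hhx (ae_of_all _ fun b => hM _))
        (hwx.mul_bdd hhy (ae_of_all _ fun b => hM _)),
      ruelle_iterate_eq_integral p hf ⟨hcont, M, hM⟩,
      ruelle_iterate_eq_integral p hf ⟨hcont, M, hM⟩]
    ring
  have hshift : |∫ b, birkhoffWeight f n x b * (h (prepend b x) - h (prepend b y)) ∂m|
      ≤ κ * min 1 (4 * Cf * ((((1 : ℝ) / 2) ^ α) ^ n * dX x y ^ α)) := by
    have := abs_integral_mul_le (φ := fun b => h (prepend b x) - h (prepend b y)) hwx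
      (hhx.sub hhy) fun b => by
      simpa only [dbar_prepend] using hLip (prepend b x) (prepend b y)
    have habs : ∫ b, |birkhoffWeight f n x b| ∂m = 1 := by
      simp_rw [abs_of_pos (birkhoffWeight_pos f n x _)]
      exact integral_birkhoffWeight p hf hnorm n x
    rwa [habs, mul_one] at this
  have hdistort : |∫ b, birkhoffWeight f n x b * h (prepend b y) ∂m
        - ∫ b, birkhoffWeight f n y b * h (prepend b y) ∂m|
      ≤ κ / 2 * min (2 * (Cf / (1 + Cf))) (Cf * dX x y ^ α) :=
    (abs_integral_mul_sub_integral_mul_le hwx hwy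
      (by rw [integral_birkhoffWeight p hf hnorm, integral_birkhoffWeight p hf hnorm]) hhy
      fun b => hc _).trans
      (mul_le_mul_of_nonneg_left (integral_abs_birkhoffWeight_sub_le p hf hnorm hd hCf hα n x y)
        (by positivity))
  rw [hsplit]
  exact (abs_add_le _ _).trans (add_le_add hshift hdistort)

end Distortion

lemma memCb_of_abs_sub_le_dbar {E : Type*} [MetricSpace E] {Cf α : ℝ} (hα : 0 < α)
    {g : (ℕ → E) → ℝ} (hg : ∀ x y, |g x - g y| ≤ dbar Cf α x y) : MemCb g := by
  refine ⟨continuous_iff_continuousAt.2 fun x₀ => ?_, ?_⟩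
  · have hd : Tendsto (fun x => 4 * Cf * dX x x₀ ^ α) (𝓝 x₀) (𝓝 0) := by
      simpa [dX_self, Real.zero_rpow hα.ne'] using
        (((continuous_dX_left x₀).rpow_const fun _ => Or.inr hα.le).const_mul (4 * Cf)).tendsto x₀
    exact tendsto_iff_norm_sub_tendsto_zero.2
      (squeeze_zero (fun _ => norm_nonneg _) (fun x => (hg x x₀).trans (min_le_right _ _)) hd)
  · obtain ⟨c, hc⟩ := exists_abs_sub_le_half fun x y => (hg x y).trans (min_le_left _ _)
    exact ⟨|c| + 1 / 2, fun x => by linarith [abs_sub_abs_le_abs_sub (g x) c, hc x]⟩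

lemma exists_pos_mul_pow_le_one (C : ℝ) {q : ℝ} (hq0 : 0 ≤ q) (hq1 : q < 1) :
    ∃ N : ℕ, 0 < N ∧ C * q ^ N ≤ 1 := by
  have hlim : Tendsto (fun N : ℕ => C * q ^ N) atTop (𝓝 0) := by
    simpa using (tendsto_pow_atTop_nhds_zero_of_lt_one hq0 hq1).const_mul C
  exact ((eventually_gt_atTop 0).and (hlim.eventually (ge_mem_nhds zero_lt_one))).exists

lemma pow_div_le_inv_mul_rpow_pow {θ : ℝ} (hθ0 : 0 < θ) (hθ1 : θ ≤ 1) {N : ℕ} (hN : 0 < N)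
    (n : ℕ) : θ ^ (n / N) ≤ θ⁻¹ * (θ ^ ((N : ℝ)⁻¹)) ^ n := by
  rw [← Real.rpow_natCast (θ ^ _) n, ← Real.rpow_mul hθ0.le, le_inv_mul_iff₀ hθ0, ← pow_succ',
    ← Real.rpow_natCast]
  refine Real.rpow_le_rpow_of_exponent_ge hθ0 hθ1 ?_
  rw [inv_mul_le_iff₀ (by positivity)]
  exact_mod_cast (Nat.lt_div_mul_add hN).le.trans_eq (by ring)

section Contraction

variable {E : Type*} [MetricSpace E] [MeasurableSpace E] [BorelSpace E] [SecondCountableTopology E]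
  (p : Measure E) [IsProbabilityMeasure p] {f : (ℕ → E) → ℝ} {Cf α : ℝ}

lemma DbarLipschitz.ruelle_iterate (hf : MemCb f) (hnorm : ∀ x, ruelle p f (fun _ => 1) x = 1)
    (hd : HasDistortionConst f Cf α) (hCf : 0 ≤ Cf) (hα : 0 ≤ α) {h : (ℕ → E) → ℝ}
    (hh : MemCb h) {κ : ℝ} (hκ : 0 ≤ κ) (hLip : DbarLipschitz Cf α κ h) (n : ℕ) :
    DbarLipschitz Cf α (2 * κ) ((ruelle p f)^[n] h) := by
  intro x y
  refine (abs_ruelle_iterate_sub_le p hf hnorm hd hCf hα hh hκ hLip n x y).trans ?_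
  have ht : 0 ≤ dX x y ^ α := Real.rpow_nonneg (dX_nonneg x y) α
  have hq : (((1 : ℝ) / 2) ^ α) ^ n ≤ 1 :=
    pow_le_one₀ (by positivity) (Real.rpow_le_one (by norm_num) (by norm_num) hα)
  have hγ : Cf / (1 + Cf) ≤ 1 := div_le_one_of_le₀ (by linarith) (by linarith)
  have hshift : min 1 (4 * Cf * ((((1 : ℝ) / 2) ^ α) ^ n * dX x y ^ α)) ≤ dbar Cf α x y :=
    min_le_min_left _ (mul_le_mul_of_nonneg_left (mul_le_of_le_one_left ht hq) (by positivity))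
  have hdistort : min (2 * (Cf / (1 + Cf))) (Cf * dX x y ^ α) ≤ 2 * dbar Cf α x y := by
    rw [dbar, mul_min_of_nonneg _ _ zero_le_two]
    exact min_le_min (by linarith) (by nlinarith)
  nlinarith [mul_le_mul_of_nonneg_left hshift hκ, mul_le_mul_of_nonneg_left hdistort hκ]

/-- Where `θ = (1 + γ) / 2` comes from: where `d̄ = 1` the distortion term contributes at most
`γ = C_f / (1 + C_f)`, and the shifted term at most `(1 - γ) / 2` since
`8 (1 + C_f)² 2^{-αN} ≤ 1`. -/
lemma DbarLipschitz.ruelle_iterate_contract (hf : MemCb f)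
    (hnorm : ∀ x, ruelle p f (fun _ => 1) x = 1) (hd : HasDistortionConst f Cf α) (hCf : 0 ≤ Cf)
    (hα : 0 ≤ α) {N : ℕ} (hN : 8 * (1 + Cf) ^ 2 * (((1 : ℝ) / 2) ^ α) ^ N ≤ 1)
    {h : (ℕ → E) → ℝ} (hh : MemCb h) {κ : ℝ} (hκ : 0 ≤ κ) (hLip : DbarLipschitz Cf α κ h) :
    DbarLipschitz Cf α ((1 + Cf / (1 + Cf)) / 2 * κ) ((ruelle p f)^[N] h) := by
  intro x y
  refine (abs_ruelle_iterate_sub_le p hf hnorm hd hCf hα hh hκ hLip N x y).trans ?_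
  set q := (((1 : ℝ) / 2) ^ α) ^ N
  set t := dX x y ^ α
  set γ := Cf / (1 + Cf) with hγ
  have hq0 : 0 ≤ q := by positivity
  have ht0 : 0 ≤ t := Real.rpow_nonneg (dX_nonneg x y) α
  have hγ0 : 0 ≤ γ := by positivity
  have hγ1 : 1 - γ = 1 / (1 + Cf) := by rw [hγ]; field_simp; ring
  have hq8 : 8 * q ≤ 1 := by nlinarith [one_le_pow₀ (n := 2) (by linarith : 1 ≤ 1 + Cf)]
  have hCfq : 8 * Cf * q ≤ 1 - γ := by
    rw [hγ1, le_div_iff₀ (by linarith)]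
    nlinarith
  rw [dbar]
  rcases le_total (4 * Cf * t) 1 with hsmall | hlarge
  · rw [min_eq_right hsmall]
    have h1 : min 1 (4 * Cf * (q * t)) ≤ Cf * t / 2 :=
      (min_le_right _ _).trans (by nlinarith [mul_nonneg hCf ht0])
    have h2 : min (2 * γ) (Cf * t) ≤ Cf * t := min_le_right _ _
    nlinarith [mul_le_mul_of_nonneg_left h1 hκ, mul_le_mul_of_nonneg_left h2 hκ,
      mul_nonneg hκ (mul_nonneg hCf ht0)]
  · rw [min_eq_left hlarge]
    have ht1 : t ≤ 1 := Real.rpow_le_one (dX_nonneg x y) (dX_le_one x y) hα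
    have h1 : min 1 (4 * Cf * (q * t)) ≤ (1 - γ) / 2 :=
      (min_le_right _ _).trans (by nlinarith [mul_nonneg (mul_nonneg hCf hq0) (sub_nonneg.2 ht1)])
    have h2 : min (2 * γ) (Cf * t) ≤ 2 * γ := min_le_left _ _
    nlinarith [mul_le_mul_of_nonneg_left h1 hκ, mul_le_mul_of_nonneg_left h2 hκ]

lemma DbarLipschitz.ruelle_iterate_pow_div (hf : MemCb f)
    (hnorm : ∀ x, ruelle p f (fun _ => 1) x = 1) (hd : HasDistortionConst f Cf α) (hCf : 0 ≤ Cf)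
    (hα : 0 ≤ α) {N : ℕ} (hN : 8 * (1 + Cf) ^ 2 * (((1 : ℝ) / 2) ^ α) ^ N ≤ 1)
    {g : (ℕ → E) → ℝ} (hg : MemCb g) (hgLip : DbarLipschitz Cf α 1 g) (n : ℕ) :
    DbarLipschitz Cf α (2 * ((1 + Cf / (1 + Cf)) / 2) ^ (n / N)) ((ruelle p f)^[n] g) := by
  have hblocks : ∀ k,
      DbarLipschitz Cf α (((1 + Cf / (1 + Cf)) / 2) ^ k) ((ruelle p f)^[N * k] g) := by
    intro k
    induction k with
    | zero => simpa using hgLip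
    | succ k ih =>
      rw [show N * (k + 1) = N + N * k by ring, Function.iterate_add_apply, pow_succ']
      exact ih.ruelle_iterate_contract p hf hnorm hd hCf hα hN
        (memCb_ruelle_iterate p hf hg _) (by positivity)
  have := (hblocks (n / N)).ruelle_iterate p hf hnorm hd hCf hα (memCb_ruelle_iterate p hf hg _)
    (by positivity) (n % N)
  rwa [← Function.iterate_add_apply, Nat.mod_add_div] at this

end Contraction

theorem statement18_general {E : Type*} [MetricSpace E]
    [TopologicalSpace.SeparableSpace E] [MeasurableSpace E] [BorelSpace E]
    (p : Measure E) [IsProbabilityMeasure p]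
    (α : ℝ) (hα0 : 0 < α)
    (f : (ℕ → E) → ℝ) (hf : MemHol α f)
    (hnormalized : ∀ x, ruelle p f (fun _ => 1) x = 1)
    (Cf : ℝ) (hCf : 0 < Cf)
    (hdist : ∀ (n : ℕ) (a : Fin n → E) (x y : ℕ → E),
      |1 - Real.exp (birkhoff f n (prepend a y) - birkhoff f n (prepend a x))|
        ≤ Cf * dX x y ^ α)
    (ν : Measure (ℕ → E)) (hν : IsProbabilityMeasure ν)
    (hconf : ∀ φ : (ℕ → E) → ℝ, MemCb φ → (∫ x, ruelle p f φ x ∂ν) = ∫ x, φ x ∂ν) :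
    ∃ C s : ℝ, 0 < C ∧ 0 < s ∧ s < 1 ∧
      ∀ μ : Measure (ℕ → E), IsProbabilityMeasure μ → ∀ n : ℕ,
        ∀ g : (ℕ → E) → ℝ, (∀ x y, |g x - g y| ≤ dbar Cf α x y) →
          |(∫ x, (ruelle p f)^[n] g x ∂μ) - ∫ x, g x ∂ν| ≤ C * s ^ n := by
  have : SecondCountableTopology E := UniformSpace.secondCountable_of_separable E
  have hfb : MemCb f := ⟨hf.1, hf.2.1⟩
  set θ := (1 + Cf / (1 + Cf)) / 2 with hθ
  have hθ0 : 0 < θ := by positivity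
  have hθ1 : θ < 1 := by
    have : Cf / (1 + Cf) < 1 := (div_lt_one (by linarith)).2 (by linarith)
    rw [hθ]
    linarith
  obtain ⟨N, hN0, hN⟩ := exists_pos_mul_pow_le_one (8 * (1 + Cf) ^ 2)
    (by positivity : 0 ≤ ((1 : ℝ) / 2) ^ α) (Real.rpow_lt_one (by norm_num) (by norm_num) hα0)
  refine ⟨2 / θ, θ ^ ((N : ℝ)⁻¹), by positivity, by positivity,
    Real.rpow_lt_one hθ0.le hθ1 (by positivity), fun μ hμ n g hg => ?_⟩
  have hgLip : DbarLipschitz Cf α 1 g := fun x y => (one_mul (dbar Cf α x y)).symm ▸ hg x y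
  have hgCb := memCb_of_abs_sub_le_dbar hα0 hg
  have hLip := hgLip.ruelle_iterate_pow_div p hfb hnormalized hdist hCf.le hα0.le hN hgCb n
  obtain ⟨hcont, M, hM⟩ := memCb_ruelle_iterate p hfb hgCb n
  rw [← integral_ruelle_iterate p hfb hconf hgCb n]
  calc _ ≤ 2 * θ ^ (n / N) :=
        abs_integral_sub_integral_le (hcont.integrable_of_abs_le hM μ)
          (hcont.integrable_of_abs_le hM ν) fun u v =>
          (hLip u v).trans (mul_le_of_le_one_right (by positivity) (min_le_left _ _))
    _ ≤ 2 / θ * (θ ^ ((N : ℝ)⁻¹)) ^ n := by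
        rw [div_eq_mul_inv, mul_assoc]
        exact mul_le_mul_of_nonneg_left (pow_div_le_inv_mul_rpow_pow hθ0 hθ1.le hN0 n) zero_le_two

/-- Exponential asymptotic stability of the Markov operator
`P = L_f^*` for a normalized bounded Hölder potential: `d(Pⁿμ, ν) ≤ C sⁿ` in the
Wasserstein metric associated to `d̄(x,y) = min{1, 4 C_f d_X(x,y)^α}`. -/
theorem statement18 {E : Type*} [MetricSpace E] [CompleteSpace E]
    [TopologicalSpace.SeparableSpace E] [MeasurableSpace E] [BorelSpace E] [Nonempty E]
    (p : Measure E) [IsProbabilityMeasure p]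
    (α : ℝ) (hα0 : 0 < α) (hα1 : α < 1)
    (f : (ℕ → E) → ℝ) (hf : MemHol α f)
    (hnormalized : ∀ x, ruelle p f (fun _ => 1) x = 1)
    (Cf : ℝ) (hCf : 0 < Cf)
    (hdist : ∀ (n : ℕ) (a : Fin n → E) (x y : ℕ → E),
      |1 - Real.exp (birkhoff f n (prepend a y) - birkhoff f n (prepend a x))|
        ≤ Cf * dX x y ^ α)
    (ν : Measure (ℕ → E)) (hν : IsProbabilityMeasure ν)
    (hconf : ∀ φ : (ℕ → E) → ℝ, MemCb φ → (∫ x, ruelle p f φ x ∂ν) = ∫ x, φ x ∂ν)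
    (huniq : ∀ ν' : Measure (ℕ → E), IsProbabilityMeasure ν' →
      (∀ φ : (ℕ → E) → ℝ, MemCb φ → (∫ x, ruelle p f φ x ∂ν') = ∫ x, φ x ∂ν') →
      ν' = ν) :
    ∃ C s : ℝ, 0 < C ∧ 0 < s ∧ s < 1 ∧
      ∀ μ : Measure (ℕ → E), IsProbabilityMeasure μ → ∀ n : ℕ,
        ∀ g : (ℕ → E) → ℝ, (∀ x y, |g x - g y| ≤ dbar Cf α x y) →
          |(∫ x, (ruelle p f)^[n] g x ∂μ) - ∫ x, g x ∂ν| ≤ C * s ^ n :=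
  statement18_general p α hα0 f hf hnormalized Cf hCf hdist ν hν hconf

end
end

section
/- Let f ∈ Hol(α) be a bounded α-Hölder normalized potential (L_f 1 = 1) that depends only on the first two coordinates, i.e. f(x) = F(x₁,x₂) for a function F:E×E→ℝ, and let ν be the unique Borel probability measure on X with L_f^*ν = ν. Define the transition kernel P(x₁,A) = ∫_E e^{F(a,x₁)}·1_A(a) dp(a) for x₁ ∈ E and Borel sets A ⊆ E. Then the pushforward π = ν∘π₁^{−1} of ν under the first-coordinate projection π₁:X→E is a stationary (invariant) measure for P: for every Borel set A ⊆ E, ∫_E P(x₁,A) dπ(x₁) = π(A). -/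
open MeasureTheory Filter Topology BoundedContinuousFunction

noncomputable section

variable {E : Type*} [MetricSpace E]

variable [MeasurableSpace E] [BorelSpace E]

/-! Since `f` depends only on `x₁, x₂`, the Ruelle operator maps `g ∘ π₁` to `(P g) ∘ π₁`, where
`P g (x₁) = ∫ e^{F(a,x₁)} g(a) dp(a)`. Testing conformality of `ν` against `g ∘ π₁` for bounded
continuous `g` therefore gives `∫ P g dπ = ∫ g dπ`, i.e. the finite measures `πP` and `π` have the
same integrals of bounded continuous functions, so they coincide; evaluating at `A` is the claim. -/

open ProbabilityTheory

namespace MeasureTheory.Measure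

variable {α β : Type*} {mα : MeasurableSpace α} {mβ : MeasurableSpace β}

theorem integral_comp_kernel {μ : Measure α} {κ : Kernel α β} {g : β → ℝ}
    (hg : Integrable g (κ ∘ₘ μ)) : ∫ y, g y ∂(κ ∘ₘ μ) = ∫ x, ∫ y, g y ∂κ x ∂μ := by
  rw [comp_eq_comp_const_apply] at hg ⊢
  exact Kernel.integral_comp hg

end MeasureTheory.Measure

namespace ProbabilityTheory.Kernel

variable {α : Type*} [MeasurableSpace α]

theorem invariant_of_forall_integral_eq [TopologicalSpace α] [HasOuterApproxClosed α]
    [BorelSpace α] {κ : Kernel α α} [IsFiniteKernel κ] {μ : Measure α} [IsFiniteMeasure μ]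
    (h : ∀ g : α →ᵇ ℝ, ∫ x, ∫ y, g y ∂κ x ∂μ = ∫ x, g x ∂μ) : Invariant κ μ :=
  ext_of_forall_integral_eq_of_IsFiniteMeasure fun g =>
    (Measure.integral_comp_kernel (g.integrable _)).trans (h g)

def withDensityConst (p : Measure α) [SFinite p] (k : α → α → ℝ) : Kernel α α :=
  withDensity (const α p) fun x y => ENNReal.ofReal (k x y)

variable {p : Measure α} {k : α → α → ℝ}

theorem integral_withDensityConst [SFinite p] (hk : Measurable (Function.uncurry k))
    (hk0 : ∀ x y, 0 ≤ k x y) (x : α) (g : α → ℝ) :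
    ∫ y, g y ∂withDensityConst p k x = ∫ y, k x y * g y ∂p := by
  have hk' : Measurable (Function.uncurry fun x y => ENNReal.ofReal (k x y)) :=
    ENNReal.measurable_ofReal.comp hk
  rw [withDensityConst, Kernel.withDensity_apply _ hk', const_apply,
    integral_withDensity_eq_integral_toReal_smul hk'.of_uncurry_left]
  · simp only [ENNReal.toReal_ofReal (hk0 x _), smul_eq_mul]
  · exact ae_of_all _ fun _ => ENNReal.ofReal_lt_top

theorem isFiniteKernel_withDensityConst [IsFiniteMeasure p] {B : ℝ} (hkB : ∀ x y, k x y ≤ B) :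
    IsFiniteKernel (withDensityConst p k) :=
  isFiniteKernel_withDensity_of_bounded _ ENNReal.ofReal_ne_top
    fun x y => ENNReal.ofReal_le_ofReal (hkB x y)

end ProbabilityTheory.Kernel

section TwoCoordinatePotential

variable {S : Type*} {F : S → S → ℝ} {f : (ℕ → S) → ℝ}

theorem apply_eq_apply_cons_const (hfF : ∀ x, f x = F (x 0) (x 1)) (a b : S) :
    F a b = f (cons a fun _ => b) := by
  rw [hfF]
  rfl

theorem continuous_uncurry_of_forall_eq [TopologicalSpace S] (hfF : ∀ x, f x = F (x 0) (x 1))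
    (hf : Continuous f) : Continuous (Function.uncurry F) := by
  have hcons : Continuous fun q : S × S => cons q.1 fun _ => q.2 :=
    continuous_pi fun n => by cases n; exacts [continuous_fst, continuous_snd]
  exact (hf.comp hcons).congr fun q => (apply_eq_apply_cons_const hfF q.1 q.2).symm

variable [MeasurableSpace S]

def transitionKernel (p : Measure S) [SFinite p] (F : S → S → ℝ) : Kernel S S :=
  Kernel.withDensityConst p fun x a => Real.exp (F a x)

theorem integral_transitionKernel {p : Measure S} [SFinite p]
    (hF : Measurable (Function.uncurry F)) (x : S) (g : S → ℝ) :
    ∫ a, g a ∂transitionKernel p F x = ∫ a, Real.exp (F a x) * g a ∂p :=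
  Kernel.integral_withDensityConst (k := fun x a => Real.exp (F a x))
    (Real.measurable_exp.comp (hF.comp measurable_swap)) (fun _ _ => (Real.exp_pos _).le) x g

theorem isFiniteKernel_transitionKernel {p : Measure S} [IsFiniteMeasure p] {M : ℝ}
    (hFM : ∀ a x, F a x ≤ M) : IsFiniteKernel (transitionKernel p F) :=
  Kernel.isFiniteKernel_withDensityConst fun x a => Real.exp_le_exp.2 (hFM a x)

theorem ruelle_comp_eval_zero (hfF : ∀ x, f x = F (x 0) (x 1)) (p : Measure S) (g : S → ℝ)
    (x : ℕ → S) : ruelle p f (fun y => g (y 0)) x = ∫ a, Real.exp (F a (x 0)) * g a ∂p := by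
  simp only [ruelle, hfF]
  rfl

variable [MetricSpace S] [SecondCountableTopology S] [BorelSpace S]

theorem invariant_map_eval_zero_of_conformal (p : Measure S) [IsFiniteMeasure p]
    (hfF : ∀ x, f x = F (x 0) (x 1)) (hf : MemCb f) (ν : Measure (ℕ → S)) [IsFiniteMeasure ν]
    (hconf : ∀ φ : (ℕ → S) → ℝ, MemCb φ → (∫ x, ruelle p f φ x ∂ν) = ∫ x, φ x ∂ν) :
    Kernel.Invariant (transitionKernel p F) (ν.map fun x => x 0) := by
  obtain ⟨hfc, M, hM⟩ := hf
  have hF : Measurable (Function.uncurry F) :=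
    (continuous_uncurry_of_forall_eq hfF hfc).measurable
  have := isFiniteKernel_transitionKernel (p := p) fun a x =>
    le_of_abs_le (apply_eq_apply_cons_const hfF a x ▸ hM _)
  have heval : Measurable fun x : ℕ → S => x 0 := measurable_pi_apply 0
  refine Kernel.invariant_of_forall_integral_eq fun g => ?_
  have hgφ : MemCb fun x : ℕ → S => g (x 0) :=
    ⟨g.continuous.comp (continuous_apply 0), ‖g‖, fun x => g.norm_coe_le_norm (x 0)⟩
  calc ∫ x, ∫ a, g a ∂transitionKernel p F x ∂ν.map (fun x => x 0)
      = ∫ x, ∫ a, g a ∂transitionKernel p F (x 0) ∂ν :=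
        integral_map heval.aemeasurable
          g.continuous.stronglyMeasurable.integral_kernel.aestronglyMeasurable
    _ = ∫ x, ruelle p f (fun y => g (y 0)) x ∂ν := by
        simp only [integral_transitionKernel hF, ruelle_comp_eval_zero hfF]
    _ = ∫ x, g (x 0) ∂ν := hconf _ hgφ
    _ = ∫ x, g x ∂ν.map (fun x => x 0) :=
        (integral_map heval.aemeasurable g.continuous.aestronglyMeasurable).symm

end TwoCoordinatePotential

theorem statement19_general {E : Type*} [MetricSpace E]
    [TopologicalSpace.SeparableSpace E] [MeasurableSpace E] [BorelSpace E]
    (p : Measure E) [IsProbabilityMeasure p]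
    (α : ℝ)
    (F : E → E → ℝ) (f : (ℕ → E) → ℝ)
    (hfF : ∀ x : ℕ → E, f x = F (x 0) (x 1))
    (hf : MemHol α f)
    (ν : Measure (ℕ → E)) (hν : IsProbabilityMeasure ν)
    (hconf : ∀ φ : (ℕ → E) → ℝ, MemCb φ → (∫ x, ruelle p f φ x ∂ν) = ∫ x, φ x ∂ν) :
    ∀ A : Set E, MeasurableSet A →
      (∫ x₁, (∫ a, Real.exp (F a x₁) * A.indicator (fun _ => (1 : ℝ)) a ∂p)
          ∂(ν.map fun x => x 0)) = ((ν.map fun x => x 0) A).toReal := by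
  intro A hA
  have : SecondCountableTopology E := UniformSpace.secondCountable_of_separable E
  set π := ν.map fun x => x 0
  have hinv : Kernel.Invariant (transitionKernel p F) π :=
    invariant_map_eval_zero_of_conformal p hfF ⟨hf.1, hf.2.1⟩ ν hconf
  have hF : Measurable (Function.uncurry F) :=
    (continuous_uncurry_of_forall_eq hfF hf.1).measurable
  calc ∫ x₁, ∫ a, Real.exp (F a x₁) * A.indicator (fun _ => (1 : ℝ)) a ∂p ∂π
      = ∫ x₁, ∫ a, A.indicator (fun _ => (1 : ℝ)) a ∂transitionKernel p F x₁ ∂π := by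
        simp only [integral_transitionKernel hF]
    _ = ∫ a, A.indicator (fun _ => (1 : ℝ)) a ∂(transitionKernel p F ∘ₘ π) := by
        refine (Measure.integral_comp_kernel ?_).symm
        rw [hinv.def]
        exact (integrable_const 1).indicator hA
    _ = (π A).toReal := by
        rw [hinv.def]
        exact integral_indicator_one hA

/-- If the normalized bounded Hölder potential `f` depends only on
the first two coordinates, `f(x) = F(x₁,x₂)`, then the pushforward `π = ν ∘ π₁⁻¹` of
the conformal measure `ν` under the first-coordinate projection is stationary for the
transition kernel `P(x₁, A) = ∫_E e^{F(a,x₁)} 1_A(a) dp(a)`. -/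
theorem statement19 {E : Type*} [MetricSpace E] [CompleteSpace E]
    [TopologicalSpace.SeparableSpace E] [MeasurableSpace E] [BorelSpace E] [Nonempty E]
    (p : Measure E) [IsProbabilityMeasure p]
    (α : ℝ) (hα0 : 0 < α) (hα1 : α < 1)
    (F : E → E → ℝ) (f : (ℕ → E) → ℝ)
    (hfF : ∀ x : ℕ → E, f x = F (x 0) (x 1))
    (hf : MemHol α f)
    (hnormalized : ∀ x, ruelle p f (fun _ => 1) x = 1)
    (ν : Measure (ℕ → E)) (hν : IsProbabilityMeasure ν)
    (hconf : ∀ φ : (ℕ → E) → ℝ, MemCb φ → (∫ x, ruelle p f φ x ∂ν) = ∫ x, φ x ∂ν) :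
    ∀ A : Set E, MeasurableSet A →
      (∫ x₁, (∫ a, Real.exp (F a x₁) * A.indicator (fun _ => (1 : ℝ)) a ∂p)
          ∂(ν.map fun x => x 0)) = ((ν.map fun x => x 0) A).toReal :=
  statement19_general p α F f hfF hf ν hν hconf

end
end
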